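/- arXiv:1405.4880 — 4 statements merged into one kernel-verified Lean document; each statement's English description precedes it below -/
import Mathlib

section
/- Let P and Q be partial orders on the same finite ground set such that the comparability graph of Q is a subgraph of the comparability graph of P. Then e(Q) ≥ e(P); moreover, if the containment of graphs is proper then e(Q) > e(P). -/
/-- The number of linear extensions of a partial order `P` on a finite type `V`. -/
noncomputable def eCount (V : Type*) [Fintype V] (P : PartialOrder V) : ℕ :=
  Nat.card {f : V ≃ Fin (Fintype.card V) // ∀ a b, P.lt a b → f a < f b}

/-! Stanley's two poset polytopes. The order-preserving maps `α → {0, …, t}` are in bijection,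
through the transfer map `f ↦ (v ↦ f v - max_{u < v} f u)`, with the maps `g : α → {0, …, t}` whose
sum along every chain is at most `t`. That second set only sees the comparability graph, and it
grows when the graph loses edges. The injective order-preserving maps number `e(P) (t+1 choose n)`
and the non-injective maps only `O(t ^ (n - 1))`, so there are `e(P) t ^ n / n! + O(t ^ (n - 1))`
order-preserving maps, and comparing leading terms gives `e(P) ≤ e(Q)`. If `u, v` are comparable
in `P` but not in `Q`, the maps taking values just above `t / 2` at `u` and `v` and small values
elsewhere are counted for `Q` but not for `P`; there are `≍ t ^ n` of them, which makes the
inequality strict. -/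

open Finset Filter Topology Asymptotics
open scoped Nat

/-- The lattice points of the `t`-th dilate of the chain polytope of `r`. -/
def chainMaps {α : Type*} (r : α → α → Prop) (t : ℕ) : Set (α → Fin (t + 1)) :=
  {g | ∀ C : Finset α, IsChain r (C : Set α) → ∑ x ∈ C, (g x : ℕ) ≤ t}

theorem Nat.card_add_card_le_of_injective {β γ : Type*} [Finite γ] {S T : Set γ} (hST : S ⊆ T)
    {f : β → γ} (hf : f.Injective) (hfT : ∀ b, f b ∈ T) (hfS : ∀ b, f b ∉ S) :
    Nat.card S + Nat.card β ≤ Nat.card T := by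
  have := Finite.of_injective f hf
  rw [← Nat.card_sum]
  refine Nat.card_le_card_of_injective (Sum.elim (Set.inclusion hST) fun b => ⟨f b, hfT b⟩) ?_
  exact (Set.inclusion_injective hST).sumElim (fun _ _ h => hf (congrArg Subtype.val h))
    fun x b h => hfS b <| (show (x : γ) = f b from congrArg Subtype.val h) ▸ x.2

section Comparison

variable {α : Type*} {r r' : α → α → Prop}

theorem chainMaps_subset (h : ∀ u v, u ≠ v → (r' u v ∨ r' v u) → (r u v ∨ r v u)) (t : ℕ) :
    chainMaps r t ⊆ chainMaps r' t :=
  fun _ hg C hC => hg C fun x hx y hy hxy => h x y hxy (hC hx hy hxy)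

theorem card_chainMaps_add_pow_le [Fintype α]
    (h : ∀ u v, u ≠ v → (r' u v ∨ r' v u) → (r u v ∨ r v u)) {u v : α} (huv : u ≠ v)
    (hr : r u v ∨ r v u) (hr' : ¬ (r' u v ∨ r' v u)) {s c t : ℕ}
    (hct : c + Fintype.card α * s ≤ t) (htc : t < 2 * c) :
    Nat.card (chainMaps r t) + s ^ Fintype.card α ≤ Nat.card (chainMaps r' t) := by
  classical
  let bump : (α → Fin s) → α → ℕ := fun a x =>
    a x + (if x = u then c else 0) + (if x = v then c else 0)
  have hs : s ≤ Fintype.card α * s := Nat.le_mul_of_pos_left s (Fintype.card_pos_iff.2 ⟨u⟩)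
  have hbump_lt (a : α → Fin s) (x : α) : bump a x < t + 1 := by
    have := (a x).isLt
    simp only [bump]
    split_ifs with hxu hxv
    · exact absurd (hxu.symm.trans hxv) huv
    all_goals omega
  have hbump_sum (a : α → Fin s) (C : Finset α) (hC : ¬ (u ∈ C ∧ v ∈ C)) :
      ∑ x ∈ C, bump a x ≤ t := by
    have ha : ∑ x ∈ C, (a x : ℕ) ≤ Fintype.card α * s :=
      (sum_le_card_nsmul C _ s fun x _ => (a x).isLt.le).trans
        (Nat.mul_le_mul_right s (card_le_univ C))
    simp only [bump, sum_add_distrib, sum_ite_eq']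
    split_ifs with hu hv
    · exact absurd ⟨hu, hv⟩ hC
    all_goals omega
  let extra : (α → Fin s) → α → Fin (t + 1) := fun a x => ⟨bump a x, hbump_lt a x⟩
  have hextra : Function.Injective extra := fun a b hab => funext fun x => Fin.ext <| by
    have := congrArg (fun g => (g x : ℕ)) hab
    simp only [extra, bump] at this
    omega
  have hmem (a : α → Fin s) : extra a ∈ chainMaps r' t := fun C hC =>
    hbump_sum a C fun ⟨hu, hv⟩ => hr' (hC (mem_coe.2 hu) (mem_coe.2 hv) huv)
  have hnotMem (a : α → Fin s) : extra a ∉ chainMaps r t := fun ha => by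
    have hpair : IsChain r ((({u, v} : Finset α)) : Set α) := by
      rw [coe_pair]
      rcases hr with hr | hr
      · exact IsChain.pair hr
      · exact Set.pair_comm v u ▸ IsChain.pair hr
    have := ha _ hpair
    simp only [sum_pair huv, extra, bump, if_neg huv, if_neg huv.symm, if_true] at this
    omega
  simpa using Nat.card_add_card_le_of_injective (chainMaps_subset h t) hextra hmem hnotMem

end Comparison

theorem Finset.exists_isGreatest_of_isChain {α : Type*} [PartialOrder α] {C : Finset α}
    (hC : IsChain (· ≤ ·) (C : Set α)) (hne : C.Nonempty) : ∃ m, IsGreatest (C : Set α) m := by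
  obtain ⟨m, hm⟩ := C.exists_maximal hne
  exact ⟨m, hm.1, fun x hx => hC.le_of_not_gt hm.1 hx fun hlt => hlt.not_ge (hm.2 hx hlt.le)⟩

namespace Transfer

open scoped Classical

variable {α : Type*} [PartialOrder α] [Fintype α]

noncomputable def supBelow (f : α → ℕ) (v : α) : ℕ := (univ.filter (· < v)).sup f

/-- Stanley's transfer map. Its inverse `chainToOrder g v` is the `g`-weight of a heaviest chain
with top element `v`. -/
noncomputable def orderToChain (f : α → ℕ) (v : α) : ℕ := f v - supBelow f v

noncomputable def chainToOrder (g : α → ℕ) : α → ℕ :=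
  wellFounded_lt.fix fun v F => g v + (univ.filter (· < v)).attach.sup fun u =>
    F u (mem_filter.1 u.2).2

theorem chainToOrder_eq (g : α → ℕ) (v : α) :
    chainToOrder g v = g v + supBelow (chainToOrder g) v := by
  rw [chainToOrder, WellFounded.fix_eq, sup_attach]
  rfl

theorem le_supBelow (f : α → ℕ) {u v : α} (h : u < v) : f u ≤ supBelow f v :=
  le_sup (f := f) (mem_filter.2 ⟨mem_univ u, h⟩)

theorem supBelow_le {f : α → ℕ} (hf : Monotone f) (v : α) : supBelow f v ≤ f v :=
  Finset.sup_le fun _ hu => hf (mem_filter.1 hu).2.le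

theorem supBelow_congr {f f' : α → ℕ} {v : α} (h : ∀ u < v, f u = f' u) :
    supBelow f v = supBelow f' v :=
  Finset.sup_congr rfl fun u hu => h u (mem_filter.1 hu).2

theorem monotone_chainToOrder (g : α → ℕ) : Monotone (chainToOrder g) := by
  intro u v huv
  rcases huv.lt_or_eq with huv | rfl
  · rw [chainToOrder_eq g v]
    exact (le_supBelow _ huv).trans (Nat.le_add_left _ _)
  · exact le_rfl

theorem orderToChain_chainToOrder (g : α → ℕ) : orderToChain (chainToOrder g) = g := by
  funext v
  rw [orderToChain, chainToOrder_eq g v, Nat.add_sub_cancel]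

theorem chainToOrder_orderToChain {f : α → ℕ} (hf : Monotone f) :
    chainToOrder (orderToChain f) = f := by
  funext v
  induction v using WellFoundedLT.induction with
  | _ v ih =>
    rw [chainToOrder_eq, supBelow_congr ih, orderToChain, Nat.sub_add_cancel (supBelow_le hf v)]

theorem sum_orderToChain_le {f : α → ℕ} (hf : Monotone f) (C : Finset α)
    (hC : IsChain (· ≤ ·) (C : Set α)) : ∑ x ∈ C, orderToChain f x ≤ C.sup f := by
  induction C using Finset.strongInduction with
  | _ C ih =>
    rcases C.eq_empty_or_nonempty with rfl | hne
    · simp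
    obtain ⟨m, hmC, hmax⟩ := exists_isGreatest_of_isChain hC hne
    have hrest : (C.erase m).sup f ≤ supBelow f m := by
      refine sup_mono fun x hx => mem_filter.2 ⟨mem_univ x, ?_⟩
      exact lt_of_le_of_ne (hmax (mem_of_mem_erase hx)) (ne_of_mem_erase hx)
    have ih' := ih _ (erase_ssubset hmC) (hC.mono (coe_subset.2 (erase_subset m C)))
    calc ∑ x ∈ C, orderToChain f x
        = orderToChain f m + ∑ x ∈ C.erase m, orderToChain f x := (add_sum_erase _ _ hmC).symm
      _ ≤ orderToChain f m + supBelow f m := by gcongr; exact ih'.trans hrest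
      _ = f m := Nat.sub_add_cancel (supBelow_le hf m)
      _ ≤ C.sup f := le_sup (f := f) hmC

theorem exists_sum_eq_chainToOrder (g : α → ℕ) (v : α) : ∃ C : Finset α,
    IsChain (· ≤ ·) (C : Set α) ∧ (∀ x ∈ C, x ≤ v) ∧ ∑ x ∈ C, g x = chainToOrder g v := by
  induction v using WellFoundedLT.induction with
  | _ v ih =>
    rw [chainToOrder_eq]
    rcases (univ.filter (· < v)).eq_empty_or_nonempty with hempty | hne
    · refine ⟨{v}, by simp, by simp, ?_⟩
      simp [supBelow, hempty]
    obtain ⟨u, hu, hsup⟩ := exists_mem_eq_sup _ hne (chainToOrder g)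
    have huv : u < v := (mem_filter.1 hu).2
    obtain ⟨D, hD, hDu, hsum⟩ := ih u huv
    have hvD : v ∉ D := fun hv => (hDu v hv).not_gt huv
    refine ⟨insert v D, ?_, ?_, ?_⟩
    · rw [coe_insert]
      exact hD.insert fun x hx _ => Or.inr ((hDu x hx).trans huv.le)
    · simp only [mem_insert, forall_eq_or_imp, le_rfl, true_and]
      exact fun x hx => (hDu x hx).trans huv.le
    · rw [sum_insert hvD, hsum, supBelow, hsup]


theorem chainToOrder_le {t : ℕ} {g : α → Fin (t + 1)} (hg : g ∈ chainMaps (· ≤ ·) t) (v : α) :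
    chainToOrder (fun x => (g x : ℕ)) v ≤ t := by
  obtain ⟨C, hC, -, hsum⟩ := exists_sum_eq_chainToOrder (fun x => (g x : ℕ)) v
  exact hsum ▸ hg C hC

theorem orderToChain_mem_chainMaps {t : ℕ} {f : α → Fin (t + 1)} (hf : Monotone f) :
    (fun v => (⟨orderToChain (fun x => (f x : ℕ)) v, (Nat.sub_le _ _).trans_lt (f v).isLt⟩ :
      Fin (t + 1))) ∈ chainMaps (· ≤ ·) t :=
  fun C hC => (sum_orderToChain_le (Fin.val_strictMono.monotone.comp hf) C hC).trans
    (Finset.sup_le fun x _ => Nat.le_of_lt_succ (f x).isLt)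

noncomputable def monotoneEquivChainMaps (t : ℕ) :
    {f : α → Fin (t + 1) // Monotone f} ≃ chainMaps (α := α) (· ≤ ·) t where
  toFun f := ⟨fun v => ⟨orderToChain (fun x => (f.1 x : ℕ)) v,
    (Nat.sub_le _ _).trans_lt (f.1 v).isLt⟩, orderToChain_mem_chainMaps f.2⟩
  invFun g := ⟨fun v => ⟨chainToOrder (fun x => (g.1 x : ℕ)) v,
    Nat.lt_succ_of_le (chainToOrder_le g.2 v)⟩,
    fun _ _ h => monotone_chainToOrder (fun x => (g.1 x : ℕ)) h⟩
  left_inv f := by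
    ext v
    exact congrFun (chainToOrder_orderToChain (Fin.val_strictMono.monotone.comp f.2)) v
  right_inv g := by
    ext v
    exact congrFun (orderToChain_chainToOrder _) v

end Transfer

section LinearExtensions

variable {α : Type*} [PartialOrder α] [Fintype α]

theorem card_orderEmbedding_fin (n M : ℕ) : Nat.card (Fin n ↪o Fin M) = M.choose n := by
  rw [Nat.card_congr Set.powersetCard.ofFinEmbEquiv, Set.powersetCard.card, Nat.card_fin]

theorem card_monotone_injective (M : ℕ) :
    Nat.card {f : α → Fin M // Monotone f ∧ Function.Injective f} =
      eCount α inferInstance * M.choose (Fintype.card α) := by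
  classical
  set n := Fintype.card α
  let Θ : {e : α ≃ Fin n // ∀ a b, a < b → e a < e b} × (Fin n ↪o Fin M) →
      {f : α → Fin M // Monotone f ∧ Function.Injective f} := fun p =>
    ⟨p.2 ∘ p.1.1, (p.2.strictMono.comp fun a b h => p.1.2 a b h).monotone,
      p.2.injective.comp p.1.1.injective⟩
  have hΘ : Function.Bijective Θ := by
    constructor
    · rintro ⟨e, o⟩ ⟨e', o'⟩ h
      have hfun : o ∘ e.1 = o' ∘ e'.1 := congrArg Subtype.val h
      have ho : o = o' := OrderEmbedding.range_inj.1 <| by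
        rw [← EquivLike.range_comp o e.1, ← EquivLike.range_comp o' e'.1, hfun]
      subst ho
      exact Prod.ext (Subtype.ext <| Equiv.ext fun a => o.injective (congrFun hfun a)) rfl
    · rintro ⟨f, hmono, hinj⟩
      set s := univ.image f
      have hs : s.card = n := card_image_of_injective _ hinj
      let iso := s.orderIsoOfFin hs
      let rank : α → Fin n := fun a => iso.symm ⟨f a, mem_image_of_mem f (mem_univ a)⟩
      have hrank : Function.Injective rank := fun a b h =>
        hinj (congrArg Subtype.val (iso.symm.injective h))
      have hbij : Function.Bijective rank :=
        (Fintype.bijective_iff_injective_and_card rank).2 ⟨hrank, (Fintype.card_fin n).symm⟩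
      refine ⟨(⟨Equiv.ofBijective rank hbij, fun a b hab => ?_⟩, s.orderEmbOfFin hs), ?_⟩
      · exact iso.symm.strictMono <| Subtype.mk_lt_mk.2 <|
          lt_of_le_of_ne (hmono hab.le) (hinj.ne hab.ne)
      · refine Subtype.ext (funext fun a => ?_)
        simp [Θ, rank, iso, ← coe_orderIsoOfFin_apply]
  rw [← Nat.card_eq_of_bijective Θ hΘ, Nat.card_prod, card_orderEmbedding_fin]
  rfl

theorem descFactorial_mul_le_card_monotone (M : ℕ) :
    eCount α inferInstance * M.descFactorial (Fintype.card α) ≤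
      (Fintype.card α)! * Nat.card {f : α → Fin M // Monotone f} := by
  rw [Nat.descFactorial_eq_factorial_mul_choose, mul_left_comm, ← card_monotone_injective]
  exact Nat.mul_le_mul_left _ (Nat.card_mono (Set.toFinite _) fun _ hf => hf.1)

theorem card_monotone_le (M : ℕ) :
    (Fintype.card α)! * Nat.card {f : α → Fin M // Monotone f} ≤
      eCount α inferInstance * M.descFactorial (Fintype.card α) +
        (Fintype.card α)! * (M ^ Fintype.card α - M.descFactorial (Fintype.card α)) := by
  classical
  have hnoninj : Fintype.card {f : α → Fin M // ¬ Function.Injective f} =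
      M ^ Fintype.card α - M.descFactorial (Fintype.card α) := by
    rw [Fintype.card_subtype_compl,
      Fintype.card_congr (Equiv.subtypeInjectiveEquivEmbedding α (Fin M)),
      Fintype.card_embedding_eq, Fintype.card_fun, Fintype.card_fin]
  have hsplit : Nat.card {f : α → Fin M // Monotone f} ≤
      Nat.card {f : α → Fin M // Monotone f ∧ Function.Injective f} +
        Fintype.card {f : α → Fin M // ¬ Function.Injective f} := by
    simp only [Nat.card_eq_fintype_card, Fintype.card_subtype]
    rw [← card_filter_add_card_filter_not (p := Function.Injective), filter_filter,
      filter_filter]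
    gcongr with f
    exact And.right
  rw [← hnoninj, Nat.descFactorial_eq_factorial_mul_choose, mul_left_comm,
    ← card_monotone_injective, ← mul_add]
  exact Nat.mul_le_mul_left _ hsplit

theorem tendsto_descFactorial_div_pow (n : ℕ) :
    Tendsto (fun M : ℕ => (M.descFactorial n : ℝ) / M ^ n) atTop (𝓝 1) := by
  have hne : ∀ᶠ M : ℕ in atTop, (M : ℝ) ^ n ≠ 0 := by
    filter_upwards [eventually_ge_atTop 1] with M hM
    exact pow_ne_zero _ (by positivity)
  exact (isEquivalent_iff_tendsto_one hne).1 (isEquivalent_descFactorial n)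

theorem tendsto_card_monotone :
    Tendsto (fun M : ℕ => ((Fintype.card α)! * Nat.card {f : α → Fin M // Monotone f} : ℝ) /
      M ^ Fintype.card α) atTop (𝓝 (eCount α inferInstance)) := by
  set n := Fintype.card α
  set e := eCount α inferInstance
  have hd := tendsto_descFactorial_div_pow n
  have hlow : Tendsto (fun M : ℕ => e * ((M.descFactorial n : ℝ) / M ^ n)) atTop (𝓝 e) := by
    simpa using hd.const_mul (e : ℝ)
  have hup : Tendsto (fun M : ℕ => e * ((M.descFactorial n : ℝ) / M ^ n) +
      n ! * (1 - (M.descFactorial n : ℝ) / M ^ n)) atTop (𝓝 e) := by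
    simpa using (hd.const_mul (e : ℝ)).add
      (((tendsto_const_nhds (x := (1 : ℝ))).sub hd).const_mul (n ! : ℝ))
  refine tendsto_of_tendsto_of_tendsto_of_le_of_le' hlow hup ?_ ?_ <;>
    filter_upwards [eventually_ge_atTop 1] with M hM
  all_goals have hpos : (0 : ℝ) < (M : ℝ) ^ n := by positivity
  · rw [← mul_div_assoc, div_le_div_iff_of_pos_right hpos]
    exact_mod_cast descFactorial_mul_le_card_monotone M
  · have h : (n ! * Nat.card {f : α → Fin M // Monotone f} : ℝ) ≤
        e * M.descFactorial n + n ! * ((M : ℝ) ^ n - M.descFactorial n) := by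
      rw [← Nat.cast_pow, ← Nat.cast_sub (Nat.descFactorial_le_pow M n)]
      exact_mod_cast card_monotone_le M
    rw [div_le_iff₀ hpos]
    refine h.trans_eq ?_
    field_simp

end LinearExtensions

theorem add_le_of_tendsto_of_add_pow_le {a b : ℕ → ℕ} {A B : ℝ} {n k : ℕ} (hk : 0 < k)
    (ha : Tendsto (fun t : ℕ => (n ! * a t : ℝ) / (t + 1) ^ n) atTop (𝓝 A))
    (hb : Tendsto (fun t : ℕ => (n ! * b t : ℝ) / (t + 1) ^ n) atTop (𝓝 B))
    (hab : ∀ s t, t + 1 = k * (s + 1) → a t + (s + 1) ^ n ≤ b t) :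
    A + n ! / k ^ n ≤ B := by
  have hτ : Tendsto (fun s : ℕ => k * (s + 1) - 1) atTop atTop :=
    tendsto_atTop_mono (fun s => Nat.le_sub_one_of_lt <|
      s.lt_succ_self.trans_le (Nat.le_mul_of_pos_left _ hk)) tendsto_id
  refine le_of_tendsto_of_tendsto' ((ha.comp hτ).add_const _) (hb.comp hτ) fun s => ?_
  simp only [Function.comp_apply]
  set t := k * (s + 1) - 1
  have ht : t + 1 = k * (s + 1) := Nat.sub_add_cancel (Nat.one_le_iff_ne_zero.2
    (Nat.mul_ne_zero hk.ne' s.succ_ne_zero))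
  have ht' : (t : ℝ) + 1 = k * (s + 1) := by exact_mod_cast ht
  have hδ : (n ! : ℝ) / k ^ n = n ! * (s + 1) ^ n / (t + 1) ^ n := by
    rw [ht', mul_pow]
    field_simp
  rw [hδ, ← add_div, ← mul_add]
  gcongr
  exact_mod_cast hab s t ht

theorem tendsto_card_chainMaps {α : Type*} [PartialOrder α] [Fintype α] :
    Tendsto (fun t : ℕ => ((Fintype.card α)! * Nat.card (chainMaps (α := α) (· ≤ ·) t) : ℝ) /
      (t + 1) ^ Fintype.card α) atTop (𝓝 (eCount α inferInstance)) := by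
  refine (tendsto_card_monotone.comp (tendsto_add_atTop_nat 1)).congr fun t => ?_
  rw [Function.comp_apply, Nat.card_congr (Transfer.monotoneEquivChainMaps t), Nat.cast_add_one]

theorem stmt_12 {V : Type*} [Fintype V] (P Q : PartialOrder V)
    (hsub : ∀ u v, u ≠ v → (Q.le u v ∨ Q.le v u) → (P.le u v ∨ P.le v u)) :
    eCount V P ≤ eCount V Q ∧
    ((∃ u v, u ≠ v ∧ (P.le u v ∨ P.le v u) ∧ ¬ (Q.le u v ∨ Q.le v u)) →
      eCount V P < eCount V Q) := by
  set n := Fintype.card V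
  have hP := @tendsto_card_chainMaps V P _
  have hQ := @tendsto_card_chainMaps V Q _
  refine ⟨?_, ?_⟩
  · refine Nat.cast_le.1 (le_of_tendsto_of_tendsto' hP hQ fun t => ?_)
    gcongr
    exact Nat.card_mono (Set.toFinite _) (chainMaps_subset hsub t)
  · rintro ⟨u, v, huv, hPuv, hQuv⟩
    -- `t + 1 = (2n + 2)(s + 1)`; the values at `u` and `v` start at `c = (t + 1) / 2`
    have hgap := add_le_of_tendsto_of_add_pow_le (k := 2 * n + 2) (by omega) hP hQ
      fun s t ht => card_chainMaps_add_pow_le hsub huv hPuv hQuv (c := (n + 1) * (s + 1))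
        (by nlinarith) (by nlinarith)
    exact_mod_cast (lt_add_of_pos_right _ (by positivity)).trans_le hgap
end

section
/- Let G be a simple graph on n vertices with chromatic number k. Then ε(G) ≥ n!/(k^{n−k}·k!). -/
/-!
Color `G` properly with `k` colors and orient every edge towards its endpoint of larger color.
This orientation is acyclic, and every labelling that lists the color classes in increasing
color order, each class in an arbitrary internal order, is a linear extension of it; hence it
has at least `∏ mᵢ!` linear extensions, where the `mᵢ` are the class sizes. The multinomial
estimate `n! ≤ k^(n-k) k! ∏ mᵢ!` then gives the bound; it follows by induction on `n`,
removing one vertex from a largest class, whose size is at least `n / k`.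
-/

/-- An orientation of a simple graph `G`: a choice of direction for each edge. -/
structure GraphOrientation {V : Type*} (G : SimpleGraph V) where
  dir : V → V → Prop
  dir_adj : ∀ u v, dir u v → G.Adj u v
  adj_dir : ∀ u v, G.Adj u v → dir u v ∨ dir v u
  asymm : ∀ u v, dir u v → ¬ dir v u

/-- An orientation is acyclic if there is no directed cycle. -/
def GraphOrientation.Acyclic {V : Type*} {G : SimpleGraph V} (O : GraphOrientation G) : Prop :=
  ∀ v, ¬ Relation.TransGen O.dir v v

/-- Linear extensions of the poset induced (by reachability) by an orientation:
bijective labelings of the vertices by `Fin (card V)` compatible with directed paths. -/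
def GraphOrientation.LinExt {V : Type*} [Fintype V] {G : SimpleGraph V} (O : GraphOrientation G) :
    Type _ :=
  {f : V ≃ Fin (Fintype.card V) // ∀ u v, Relation.TransGen O.dir u v → f u < f v}

/-- The number of linear extensions of the poset induced by an orientation. -/
noncomputable def GraphOrientation.numLinExt {V : Type*} [Fintype V] {G : SimpleGraph V}
    (O : GraphOrientation G) : ℕ :=
  Nat.card O.LinExt


/-- The maximal number of linear extensions of a poset induced by an acyclic
orientation of `G`, denoted `ε(G)` in the paper. -/
noncomputable def maxLinExt {V : Type*} [Fintype V] (G : SimpleGraph V) : ℕ :=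
  sSup {k | ∃ O : GraphOrientation G, O.Acyclic ∧ k = O.numLinExt}

open Finset Function Nat

section Multinomial

variable {ι : Type*} [Fintype ι] [DecidableEq ι]

lemma sum_update_pred (m : ι → ℕ) {j : ι} (hj : m j ≠ 0) :
    ∑ i, update m j (m j - 1) i = ∑ i, m i - 1 := by
  rw [sum_update_of_mem (mem_univ j), ← add_sum_erase _ _ (mem_univ j), sdiff_singleton_eq_erase]
  omega

lemma prod_factorial_update_pred (m : ι → ℕ) {j : ι} (hj : m j ≠ 0) :
    m j * ∏ i, (update m j (m j - 1) i)! = ∏ i, (m i)! := by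
  simp_rw [apply_update (fun _ n => n !)]
  rw [prod_update_of_mem (mem_univ j), ← mul_prod_erase _ _ (mem_univ j),
    sdiff_singleton_eq_erase, ← mul_assoc, mul_factorial_pred hj]

end Multinomial

theorem factorial_sum_le {ι : Type*} [Fintype ι] (m : ι → ℕ) :
    (∑ i, m i)! ≤
      Fintype.card ι ^ (∑ i, m i - Fintype.card ι) * (Fintype.card ι)! * ∏ i, (m i)! := by
  classical
  set k := Fintype.card ι
  induction hn : ∑ i, m i using Nat.strong_induction_on generalizing m with
  | _ n ih =>
  rcases le_or_gt n k with hnk | hkn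
  · rw [Nat.sub_eq_zero_of_le hnk, pow_zero, one_mul]
    exact (factorial_le hnk).trans (Nat.le_mul_of_pos_right _ (prod_pos fun i _ => factorial_pos _))
  have hι : (univ : Finset ι).Nonempty := by
    by_contra h
    simp [univ_eq_empty_iff.1 (not_nonempty_iff_eq_empty.1 h), ← hn] at hkn
  obtain ⟨j, -, hj⟩ := exists_max_image univ m hι
  -- a largest part `m j` has `n ≤ k * m j`, which pays for lowering it by one
  have hn_le : n ≤ k * m j := by
    calc n = ∑ i, m i := hn.symm
      _ ≤ ∑ _i : ι, m j := sum_le_sum fun i _ => hj i (mem_univ i)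
      _ = k * m j := by simp [k]
  have hmj : m j ≠ 0 := by rintro h; rw [h] at hn_le; omega
  have ih' := ih (n - 1) (by omega) (update m j (m j - 1)) (by rw [sum_update_pred m hmj, hn])
  calc n ! = n * (n - 1)! := (mul_factorial_pred (by omega)).symm
    _ ≤ k * m j * (k ^ (n - 1 - k) * k ! * ∏ i, (update m j (m j - 1) i)!) :=
      Nat.mul_le_mul hn_le ih'
    _ = k ^ (n - 1 - k + 1) * k ! * (m j * ∏ i, (update m j (m j - 1) i)!) := by ring
    _ = k ^ (n - k) * k ! * ∏ i, (m i)! := by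
      rw [prod_factorial_update_pred m hmj, show n - 1 - k + 1 = n - k by omega]

lemma exists_equiv_fin_strictMono_of_lt {V α : Type*} [Fintype V] [LinearOrder α] (c : V → α) :
    ∃ f : V ≃ Fin (Fintype.card V), ∀ u v, c u < c v → f u < f v := by
  let e := Fintype.equivFin V
  let _ : LinearOrder V := LinearOrder.lift' (fun v => toLex (c v, e v))
    fun a b h => e.injective (congrArg (fun p => (ofLex p).2) h)
  exact ⟨(monoEquivOfFin V rfl).symm.toEquiv,
    fun u v h => (monoEquivOfFin V rfl).symm.strictMono
      (show toLex (c u, e u) < toLex (c v, e v) from Prod.Lex.left _ _ h)⟩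

namespace GraphOrientation

variable {V : Type*} {G : SimpleGraph V}

def ofColoring {α : Type*} [LinearOrder α] (c : G.Coloring α) : GraphOrientation G where
  dir u v := G.Adj u v ∧ c u < c v
  dir_adj _ _ h := h.1
  adj_dir _ _ h := (c.valid h).lt_or_gt.imp (⟨h, ·⟩) (⟨h.symm, ·⟩)
  asymm _ _ h h' := h.2.not_gt h'.2

lemma lt_of_transGen_ofColoring {α : Type*} [LinearOrder α] (c : G.Coloring α) {u v : V}
    (h : Relation.TransGen (ofColoring c).dir u v) : c u < c v := by
  induction h with
  | single h => exact h.2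
  | tail _ h ih => exact ih.trans h.2

lemma acyclic_ofColoring {α : Type*} [LinearOrder α] (c : G.Coloring α) :
    (ofColoring c).Acyclic :=
  fun _ h => (lt_of_transGen_ofColoring c h).false

variable [Fintype V]

instance (O : GraphOrientation G) : Finite O.LinExt := Subtype.finite

lemma numLinExt_le_factorial (O : GraphOrientation G) : O.numLinExt ≤ (Fintype.card V)! := by
  classical
  calc O.numLinExt ≤ Nat.card (V ≃ Fin (Fintype.card V)) :=
        Nat.card_le_card_of_injective _ Subtype.val_injective
    _ = (Fintype.card V)! := by
        rw [Nat.card_eq_fintype_card, Fintype.card_equiv (Fintype.equivFin V)]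

lemma numLinExt_le_maxLinExt {O : GraphOrientation G} (hO : O.Acyclic) :
    O.numLinExt ≤ maxLinExt G :=
  le_csSup ⟨_, by rintro _ ⟨O', -, rfl⟩; exact numLinExt_le_factorial O'⟩ ⟨O, hO, rfl⟩

lemma card_colorStabilizer_le_numLinExt {α : Type*} [LinearOrder α] (c : G.Coloring α) :
    Nat.card {g : Equiv.Perm V // c ∘ g = c} ≤ (ofColoring c).numLinExt := by
  obtain ⟨f, hf⟩ := exists_equiv_fin_strictMono_of_lt c
  refine Nat.card_le_card_of_injective (fun g => ⟨g.1.trans f, fun u v huv => hf _ _ ?_⟩) ?_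
  · exact (congrFun g.2 u).trans_lt
      ((lt_of_transGen_ofColoring c huv).trans_eq (congrFun g.2 v).symm)
  · intro g g' h
    exact Subtype.ext <| Equiv.ext fun v =>
      f.injective (Equiv.congr_fun (congrArg Subtype.val h) v)

end GraphOrientation

open GraphOrientation in
theorem factorial_le_mul_maxLinExt_of_colorable {V : Type*} [Fintype V] {G : SimpleGraph V}
    {k : ℕ} (h : G.Colorable k) :
    (Fintype.card V)! ≤ k ^ (Fintype.card V - k) * k ! * maxLinExt G := by
  classical
  obtain ⟨c⟩ := h
  have hsum : ∑ i, Fintype.card {v // c v = i} = Fintype.card V := by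
    rw [Fintype.card_congr (Equiv.sigmaFiberEquiv c).symm, Fintype.card_sigma]
  calc (Fintype.card V)!
      ≤ k ^ (Fintype.card V - k) * k ! * ∏ i, (Fintype.card {v // c v = i})! := by
        simpa only [hsum, Fintype.card_fin] using
          factorial_sum_le fun i => Fintype.card {v // c v = i}
    _ = k ^ (Fintype.card V - k) * k ! * Nat.card {g : Equiv.Perm V // c ∘ g = c} := by
        rw [Nat.card_eq_fintype_card, DomMulAct.stabilizer_card]
    _ ≤ k ^ (Fintype.card V - k) * k ! * maxLinExt G := by
        gcongr
        exact (card_colorStabilizer_le_numLinExt c).trans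
          (numLinExt_le_maxLinExt (acyclic_ofColoring c))

theorem stmt_14 {V : Type*} [Fintype V] (G : SimpleGraph V) (k : ℕ)
    (hk : G.chromaticNumber = k) :
    (Nat.factorial (Fintype.card V) : ℝ) /
        ((k : ℝ) ^ (Fintype.card V - k) * (Nat.factorial k : ℝ)) ≤ maxLinExt G := by
  refine div_le_of_le_mul₀ (by positivity) (by positivity) ?_
  rw [mul_comm]
  exact_mod_cast factorial_le_mul_maxLinExt_of_colorable
    (SimpleGraph.chromaticNumber_le_iff_colorable.mp hk.le)
end

section
/- For any simple graph G on n vertices, ε(G) is at most the number of acyclic orientations of the complement graph Ḡ, with equality if and only if G is a complete p-partite graph for some p ∈ [n]. -/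
/-- The number of acyclic orientations of a graph. -/
noncomputable def numAcyclicOrientations {V : Type*} (G : SimpleGraph V) : ℕ :=
  Nat.card {O : GraphOrientation G // O.Acyclic}

/-!
A linear extension `g` of an acyclic orientation `O` of `G` orients each edge of `Gᶜ` towards its
larger label, and `g` can be recovered from that orientation: the relative order of two vertices
is fixed by `O` if they are adjacent and by the orientation of `Gᶜ` otherwise. So `ε(G)` is at most
the number of acyclic orientations of `Gᶜ`, with equality iff for some `O` this injection is onto,
i.e. iff `O ∪ D` is acyclic for every acyclic orientation `D` of `Gᶜ`.

If `G` is complete multipartite, orient it along an ordering of the parts: every step of `O ∪ D`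
then increases the pair (part, label in a linear extension of `D`). Otherwise some `v, w₁, w₂`
span only the edge `w₁w₂` of `G`; if `O` orients it `w₁ → w₂`, an acyclic `D` containing
`w₂ → v → w₁` closes a directed cycle.
-/

open Relation Function

theorem Relation.TransGen.lt_of_forall_lt {α β : Type*} [Preorder β] {r : α → α → Prop} {a b : α}
    (f : α → β) (hf : ∀ x y, r x y → f x < f y) (h : TransGen r a b) : f a < f b := by
  simpa [transGen_eq_self] using h.lift f hf

theorem Relation.exists_equivFin_lt_of_acyclic {α : Type*} [Fintype α] {r : α → α → Prop}
    (hr : ∀ a, ¬ TransGen r a a) : ∃ e : α ≃ Fin (Fintype.card α), ∀ a b, r a b → e a < e b := by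
  let : IsStrictOrder α (TransGen r) := { irrefl := hr, trans := fun _ _ _ => TransGen.trans }
  let : PartialOrder α := partialOrderOfSO (TransGen r)
  let : Fintype (LinearExtension α) := inferInstanceAs (Fintype α)
  have hmono : StrictMono (toLinearExtension : α → LinearExtension α) :=
    toLinearExtension.monotone.strictMono_of_injective fun _ _ h => h
  refine ⟨(monoEquivOfFin (LinearExtension α) rfl).symm.toEquiv, fun a b hab => ?_⟩
  exact (monoEquivOfFin (LinearExtension α) rfl).symm.strictMono (hmono (TransGen.single hab))

theorem Equiv.eq_of_lt_imp_lt {α : Type*} {n : ℕ} {e e' : α ≃ Fin n}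
    (h : ∀ a b, e a < e b → e' a < e' b) : e = e' := by
  have hmono : StrictMono (e' ∘ e.symm) := fun i j hij => by
    simpa using h (e.symm i) (e.symm j) (by simpa using hij)
  exact Equiv.ext fun a => by simpa using (hmono.apply_eq (x := e a)).symm

theorem exists_injective_lex_lt_lt {α : Type*} [Countable α] {a b c : α} (hab : a ≠ b) (hac : a ≠ c)
    (hbc : b ≠ c) : ∃ f : α → ℕ ×ₗ ℕ, Injective f ∧ f a < f b ∧ f b < f c := by
  classical
  obtain ⟨e, he⟩ := exists_injective_nat α
  refine ⟨fun x => toLex (if x = a then 0 else if x = b then 1 else 2, e x),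
    fun x y h => ?_, ?_, ?_⟩
  · exact he (congrArg (fun p => (ofLex p).2) h)
  · simp [Prod.Lex.toLex_lt_toLex, hab.symm]
  · simp [Prod.Lex.toLex_lt_toLex, hab.symm, hac.symm, hbc.symm]

namespace GraphOrientation

variable {V : Type*} {G : SimpleGraph V}

theorem ext {O O' : GraphOrientation G} (h : O.dir = O'.dir) : O = O' := by
  cases O; cases O'; simpa using h

instance [Finite V] : Finite (GraphOrientation G) :=
  Finite.of_injective GraphOrientation.dir fun _ _ => ext

def ofMap {α : Type*} [LinearOrder α] (f : V → α) (hf : ∀ u v, G.Adj u v → f u ≠ f v) :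
    GraphOrientation G where
  dir u v := G.Adj u v ∧ f u < f v
  dir_adj _ _ h := h.1
  adj_dir u v h := (lt_or_gt_of_ne (hf u v h)).imp (⟨h, ·⟩) (⟨h.symm, ·⟩)
  asymm _ _ h h' := lt_asymm h.2 h'.2

theorem acyclic_ofMap {α : Type*} [LinearOrder α] (f : V → α) (hf : ∀ u v, G.Adj u v → f u ≠ f v) :
    (ofMap f hf).Acyclic :=
  fun _ hv => lt_irrefl _ (hv.lt_of_forall_lt f fun _ _ h => h.2)

theorem exists_acyclic [Finite V] : ∃ O : GraphOrientation G, O.Acyclic := by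
  obtain ⟨e, he⟩ := exists_injective_nat V
  exact ⟨ofMap e fun _ _ h => he.ne h.ne, acyclic_ofMap _ _⟩

def IsAcyclicWithEveryCompl (O : GraphOrientation G) : Prop :=
  ∀ D : GraphOrientation Gᶜ, D.Acyclic → ∀ v, ¬ TransGen (fun u w => O.dir u w ∨ D.dir u w) v v

section LinExt

variable [Fintype V] (O : GraphOrientation G)

def linExtToCompl (g : O.LinExt) : {D : GraphOrientation Gᶜ // D.Acyclic} :=
  ⟨ofMap g.1 fun _ _ h => g.1.injective.ne h.ne, acyclic_ofMap _ _⟩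

theorem linExtToCompl_injective : Injective O.linExtToCompl := by
  intro g g' hgg'
  have hdir : ∀ u v, Gᶜ.Adj u v → g.1 u < g.1 v → g'.1 u < g'.1 v := fun u v hadj huv => by
    have : (O.linExtToCompl g).1.dir u v := ⟨hadj, huv⟩
    rw [hgg'] at this
    exact this.2
  refine Subtype.ext (Equiv.eq_of_lt_imp_lt fun u v huv => ?_)
  by_cases hadj : G.Adj u v
  · rcases O.adj_dir u v hadj with h | h
    · exact g'.2 u v (.single h)
    · exact absurd (g.2 v u (.single h)) huv.asymm
  · exact hdir u v ⟨fun h => huv.ne (congrArg _ h), hadj⟩ huv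

theorem numLinExt_le : O.numLinExt ≤ numAcyclicOrientations Gᶜ :=
  Nat.card_le_card_of_injective _ O.linExtToCompl_injective

theorem linExtToCompl_surjective_iff :
    Surjective O.linExtToCompl ↔ O.IsAcyclicWithEveryCompl := by
  constructor
  · intro hsurj D hD v hv
    obtain ⟨g, hg⟩ := hsurj ⟨D, hD⟩
    refine lt_irrefl _ (hv.lt_of_forall_lt g.1 fun u w huw => ?_)
    rcases huw with h | h
    · exact g.2 u w (.single h)
    · rw [← show (O.linExtToCompl g).1 = D from congrArg Subtype.val hg] at h
      exact h.2
  · rintro hacyc ⟨D, hD⟩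
    obtain ⟨e, he⟩ := exists_equivFin_lt_of_acyclic (hacyc D hD)
    refine ⟨⟨e, fun u v huv => huv.lt_of_forall_lt e fun a b h => he a b (.inl h)⟩, ?_⟩
    refine Subtype.ext (ext (funext₂ fun u v => propext ⟨fun ⟨hadj, huv⟩ => ?_, fun h => ?_⟩))
    · exact (D.adj_dir u v hadj).resolve_right fun h => huv.asymm (he v u (.inr h))
    · exact ⟨D.dir_adj u v h, he u v (.inr h)⟩

theorem numLinExt_eq_iff_surjective :
    O.numLinExt = numAcyclicOrientations Gᶜ ↔ Surjective O.linExtToCompl := by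
  have hbij := Nat.bijective_iff_injective_and_card O.linExtToCompl
  exact ⟨fun h => (hbij.2 ⟨O.linExtToCompl_injective, h⟩).2,
    fun h => (hbij.1 ⟨O.linExtToCompl_injective, h⟩).2⟩

end LinExt

theorem isAcyclicWithEveryCompl_ofMap {α : Type*} [LinearOrder α] [Fintype V] {f : V → α}
    (hf : ∀ u v, G.Adj u v ↔ f u ≠ f v) :
    (ofMap f fun u v => (hf u v).1).IsAcyclicWithEveryCompl := by
  intro D hD _
  obtain ⟨e, he⟩ := exists_equivFin_lt_of_acyclic hD
  refine fun hv => lt_irrefl _ (hv.lt_of_forall_lt (fun w => toLex (f w, e w)) fun u w huw => ?_)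
  rw [Prod.Lex.toLex_lt_toLex]
  rcases huw with h | h
  · exact .inl h.2
  · exact .inr ⟨not_not.1 (mt (hf u w).2 (D.dir_adj u w h).2), he u w h⟩

theorem not_isAcyclicWithEveryCompl_of_isPathGraph3Compl [Finite V] (O : GraphOrientation G)
    {v w₁ w₂ : V} (h : G.IsPathGraph3Compl v w₁ w₂) (hO : O.dir w₁ w₂) :
    ¬ O.IsAcyclicWithEveryCompl := by
  obtain ⟨f, hf, h₂, h₁⟩ := exists_injective_lex_lt_lt h.ne_snd.symm h.fst_ne_snd.symm h.ne_fst
  intro hacyc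
  refine hacyc _ (acyclic_ofMap f fun _ _ h => hf.ne h.ne) w₁ ?_
  refine .tail (.tail (.single (.inl hO)) (.inr ⟨⟨h.ne_snd.symm, ?_⟩, h₂⟩))
    (.inr ⟨⟨h.ne_fst, ?_⟩, h₁⟩)
  · exact fun hadj => h.not_adj_snd hadj.symm
  · exact h.not_adj_fst

theorem IsAcyclicWithEveryCompl.isCompleteMultipartite [Finite V] {O : GraphOrientation G}
    (hO : O.IsAcyclicWithEveryCompl) : G.IsCompleteMultipartite := by
  by_contra hG
  obtain ⟨v, w₁, w₂, h⟩ := SimpleGraph.exists_isPathGraph3Compl_of_not_isCompleteMultipartite hG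
  rcases O.adj_dir w₁ w₂ h.adj with hdir | hdir
  · exact O.not_isAcyclicWithEveryCompl_of_isPathGraph3Compl h hdir hO
  · exact O.not_isAcyclicWithEveryCompl_of_isPathGraph3Compl h.symm hdir hO

end GraphOrientation

namespace SimpleGraph

variable {V : Type*} [Fintype V] {G : SimpleGraph V}

theorem isCompleteMultipartite_iff_exists_fin : G.IsCompleteMultipartite ↔
    ∃ p ≤ Fintype.card V, ∃ f : V → Fin p, ∀ u v, G.Adj u v ↔ f u ≠ f v := by
  constructor
  · intro hG
    let e := Finite.equivFin (Quotient hG.setoid)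
    refine ⟨_, ?_, fun v => e ⟦v⟧, fun u v => ?_⟩
    · exact (Nat.card_le_card_of_surjective _ Quotient.mk_surjective).trans_eq
        Nat.card_eq_fintype_card
    · rw [e.injective.ne_iff, Ne, Quotient.eq]
      exact not_not.symm
  · rintro ⟨p, -, f, hf⟩
    exact ⟨fun u v w huv hvw => by simp_all⟩

end SimpleGraph

section maxLinExt

variable {V : Type*} [Fintype V] (G : SimpleGraph V)

theorem nonempty_numLinExt :
    {k | ∃ O : GraphOrientation G, O.Acyclic ∧ k = O.numLinExt}.Nonempty :=
  let ⟨O, hO⟩ := GraphOrientation.exists_acyclic (G := G)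
  ⟨_, O, hO, rfl⟩

theorem bddAbove_numLinExt : BddAbove {k | ∃ O : GraphOrientation G, O.Acyclic ∧ k = O.numLinExt} :=
  ⟨_, by rintro _ ⟨O, -, rfl⟩; exact O.numLinExt_le⟩

theorem maxLinExt_le : maxLinExt G ≤ numAcyclicOrientations Gᶜ := by
  refine csSup_le (nonempty_numLinExt G) ?_
  rintro _ ⟨O, -, rfl⟩
  exact O.numLinExt_le

theorem maxLinExt_eq_iff : maxLinExt G = numAcyclicOrientations Gᶜ ↔ G.IsCompleteMultipartite := by
  constructor
  · intro h
    obtain ⟨O, -, hmax⟩ := Nat.sSup_mem (nonempty_numLinExt G) (bddAbove_numLinExt G)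
    change maxLinExt G = _ at hmax
    rw [h, eq_comm, O.numLinExt_eq_iff_surjective, O.linExtToCompl_surjective_iff] at hmax
    exact hmax.isCompleteMultipartite
  · intro hG
    obtain ⟨p, -, f, hf⟩ := G.isCompleteMultipartite_iff_exists_fin.1 hG
    let O := GraphOrientation.ofMap f fun u w => (hf u w).1
    have hO : O.numLinExt = numAcyclicOrientations Gᶜ := by
      rw [O.numLinExt_eq_iff_surjective, O.linExtToCompl_surjective_iff]
      exact GraphOrientation.isAcyclicWithEveryCompl_ofMap hf
    refine (maxLinExt_le G).antisymm (hO ▸ le_csSup (bddAbove_numLinExt G) ?_)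
    exact ⟨O, GraphOrientation.acyclic_ofMap _ _, rfl⟩

end maxLinExt

theorem stmt_16 {V : Type*} [Fintype V] (G : SimpleGraph V) :
    maxLinExt G ≤ numAcyclicOrientations Gᶜ ∧
    (maxLinExt G = numAcyclicOrientations Gᶜ ↔
      ∃ p : ℕ, p ≤ Fintype.card V ∧
        ∃ f : V → Fin p, ∀ u v, G.Adj u v ↔ f u ≠ f v) := by
  rw [maxLinExt_eq_iff, SimpleGraph.isCompleteMultipartite_iff_exists_fin]
  exact ⟨maxLinExt_le G, Iff.rfl⟩
end

section
/- Let G_o = (V,E) be a directed graph (with no pair of opposite edges). Then (1/2)·∑_{v∈V}(indeg(v) − outdeg(v))² = |E| + tri(G_o) + inc(G_o) − com(G_o), where tri(G_o) counts directed triangles {(u,v),(v,w),(u,w)} ⊆ E, inc(G_o) counts triples u,v,w with v,w non-adjacent and either both (u,v),(u,w) ∈ E or both (v,u),(w,u) ∈ E, and com(G_o) counts directed 2-paths (u,v),(v,w) ∈ E with u,w non-adjacent. -/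
/-- In-degree of `v` in the directed graph with edge relation `r`. -/
noncomputable def dIndeg {V : Type*} (r : V → V → Prop) (v : V) : ℕ :=
  Nat.card {u : V // r u v}

/-- Out-degree of `v` in the directed graph with edge relation `r`. -/
noncomputable def dOutdeg {V : Type*} (r : V → V → Prop) (v : V) : ℕ :=
  Nat.card {u : V // r v u}

/-- The number of directed edges. -/
noncomputable def dEdges {V : Type*} (r : V → V → Prop) : ℕ :=
  Nat.card {p : V × V // r p.1 p.2}

/-- The number of directed (transitive) triangles `(u,v),(v,w),(u,w)`. -/
noncomputable def dTri {V : Type*} (r : V → V → Prop) : ℕ :=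
  Nat.card {t : V × V × V // r t.1 t.2.1 ∧ r t.2.1 t.2.2 ∧ r t.1 t.2.2}

/-- The number of directed 2-paths `(u,v),(v,w)` with `u,w` non-adjacent. -/
noncomputable def dCom {V : Type*} (r : V → V → Prop) : ℕ :=
  Nat.card {t : V × V × V //
    r t.1 t.2.1 ∧ r t.2.1 t.2.2 ∧ ¬ r t.1 t.2.2 ∧ ¬ r t.2.2 t.1}

/-- The number of triples `u, {v,w}` with `v ≠ w` non-adjacent and either both
`(u,v),(u,w)` directed edges, or both `(v,u),(w,u)` directed edges. -/
noncomputable def dInc {V : Type*} (r : V → V → Prop) : ℕ :=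
  Nat.card {p : V × Sym2 V // ∃ v w, p.2 = s(v, w) ∧ v ≠ w ∧ ¬ r v w ∧ ¬ r w v ∧
    ((r p.1 v ∧ r p.1 w) ∨ (r v p.1 ∧ r w p.1))}

/-!
Expand `(indeg v - outdeg v)² = indeg² + outdeg² - 2 indeg·outdeg` and read each sum over `v` as
a count of ordered triples centred at `v`. The products `indeg v · outdeg v` count directed
2-paths through `v`; since there are no 3-cycles, each is a transitive triangle or a path with
non-adjacent ends. The squares `outdeg v ²` count ordered pairs of out-neighbours of `v`: equal
pairs (edges), adjacent pairs (each triangle twice, at its source) and non-adjacent pairs, and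
`indeg v ²` is the same for the reversed graph (triangles at their sink). The non-adjacent
ordered pairs count each pair in `inc` twice.
-/

open Finset Function

theorem natCard_subtype_prod {α β : Type*} [Fintype α] [Finite β] (p : α → β → Prop) :
    Nat.card {c : α × β // p c.1 c.2} = ∑ a, Nat.card {b // p a b} := by
  rw [Nat.card_congr (Equiv.subtypeProdEquivSigmaSubtype p), Nat.card_sigma]

theorem natCard_subtype_or {α : Type*} [Finite α] {p q : α → Prop} (h : ∀ x, p x → ¬ q x) :
    Nat.card {x // p x ∨ q x} = Nat.card {x // p x} + Nat.card {x // q x} := by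
  classical
  have := Fintype.ofFinite α
  simp only [Nat.card_eq_fintype_card]
  exact Fintype.card_subtype_or_disjoint p q fun s hp hq x hx => h x (hp x hx) (hq x hx)

theorem SimpleGraph.two_mul_natCard_edgeSet {V : Type*} [Fintype V] (G : SimpleGraph V) :
    2 * Nat.card G.edgeSet = Nat.card {x : V × V // G.Adj x.1 x.2} := by
  classical
  rw [Nat.card_eq_fintype_card, SimpleGraph.card_edgeSet, SimpleGraph.two_mul_card_edgeFinset,
    Nat.card_eq_fintype_card, Fintype.card_subtype]

section Digraph

variable {V : Type*} (r : V → V → Prop)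

def NonadjOutPair (u v w : V) : Prop :=
  r u v ∧ r u w ∧ v ≠ w ∧ ¬ r v w ∧ ¬ r w v

def incGraph (u : V) : SimpleGraph V where
  Adj v w := NonadjOutPair r u v w ∨ NonadjOutPair (flip r) u v w
  symm := ⟨fun v w => by unfold NonadjOutPair flip; tauto⟩
  loopless := ⟨fun v => by unfold NonadjOutPair; tauto⟩

theorem dEdges_flip : dEdges (flip r) = dEdges r :=
  Nat.card_congr ((Equiv.prodComm V V).subtypeEquiv fun _ => Iff.rfl)

theorem dTri_flip : dTri (flip r) = dTri r :=
  Nat.card_congr <| (Involutive.toPerm (fun t : V × V × V => (t.2.2, t.2.1, t.1))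
    fun _ => rfl).subtypeEquiv fun _ => by simp only [flip]; tauto

variable [Fintype V]

theorem sum_natCard_mul_natCard (p q : V → V → Prop) :
    ∑ v, Nat.card {u // p v u} * Nat.card {w // q v w} =
      Nat.card {t : V × V × V // p t.1 t.2.1 ∧ q t.1 t.2.2} := by
  rw [natCard_subtype_prod fun v (x : V × V) => p v x.1 ∧ q v x.2]
  simp only [Nat.card_congr Equiv.subtypeProdEquivProd, Nat.card_prod]

theorem sum_dOutdeg_sq (hasymm : ∀ u v, r u v → ¬ r v u) :
    ∑ v, dOutdeg r v ^ 2 =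
      dEdges r + 2 * dTri r + Nat.card {t : V × V × V // NonadjOutPair r t.1 t.2.1 t.2.2} := by
  have hirr : ∀ v, ¬ r v v := fun v h => hasymm v v h h
  have hsplit : ∀ t : V × V × V, r t.1 t.2.1 ∧ r t.1 t.2.2 ↔
      (r t.1 t.2.1 ∧ t.2.1 = t.2.2) ∨ (r t.1 t.2.1 ∧ r t.2.1 t.2.2 ∧ r t.1 t.2.2) ∨
        (r t.1 t.2.2 ∧ r t.2.2 t.2.1 ∧ r t.1 t.2.1) ∨ NonadjOutPair r t.1 t.2.1 t.2.2 := by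
    rintro ⟨u, v, w⟩
    by_cases hvw : v = w
    · subst hvw
      simp [NonadjOutPair, hirr]
    · unfold NonadjOutPair
      have := hasymm v w
      tauto
  have hdiag : Nat.card {t : V × V × V // r t.1 t.2.1 ∧ t.2.1 = t.2.2} = dEdges r :=
    Nat.card_congr
      { toFun := fun t => ⟨(t.1.1, t.1.2.1), t.2.1⟩
        invFun := fun p => ⟨(p.1.1, p.1.2, p.1.2), p.2, rfl⟩
        left_inv := by rintro ⟨⟨u, v, w⟩, h, rfl : v = w⟩; rfl
        right_inv := fun _ => rfl }
  have hswap : Nat.card {t : V × V × V // r t.1 t.2.2 ∧ r t.2.2 t.2.1 ∧ r t.1 t.2.1} = dTri r :=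
    Nat.card_congr <| (Involutive.toPerm (fun t : V × V × V => (t.1, t.2.2, t.2.1))
      fun _ => rfl).subtypeEquiv fun _ => Iff.rfl
  simp only [sq, dOutdeg]
  rw [sum_natCard_mul_natCard, Nat.card_congr (Equiv.subtypeEquivRight hsplit),
    natCard_subtype_or, natCard_subtype_or, natCard_subtype_or, hdiag, hswap, dTri]
  · ring
  all_goals
    rintro ⟨u, v, w⟩
    unfold NonadjOutPair
    have := hasymm v w
    have := hirr v
    grind

theorem sum_dIndeg_sq (hasymm : ∀ u v, r u v → ¬ r v u) :
    ∑ v, dIndeg r v ^ 2 = dEdges r + 2 * dTri r +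
      Nat.card {t : V × V × V // NonadjOutPair (flip r) t.1 t.2.1 t.2.2} := by
  rw [← dEdges_flip, ← dTri_flip]
  exact sum_dOutdeg_sq (flip r) fun u v => hasymm v u

theorem sum_dIndeg_mul_dOutdeg (hcycle : ∀ u v w, r u v → r v w → ¬ r w u) :
    ∑ v, dIndeg r v * dOutdeg r v = dTri r + dCom r := by
  have hsplit : ∀ t : V × V × V, r t.1 t.2.1 ∧ r t.2.1 t.2.2 ↔
      (r t.1 t.2.1 ∧ r t.2.1 t.2.2 ∧ r t.1 t.2.2) ∨
        (r t.1 t.2.1 ∧ r t.2.1 t.2.2 ∧ ¬ r t.1 t.2.2 ∧ ¬ r t.2.2 t.1) := by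
    rintro ⟨u, v, w⟩
    have := hcycle u v w
    tauto
  calc ∑ v, dIndeg r v * dOutdeg r v
      = Nat.card {t : V × V × V // r t.2.1 t.1 ∧ r t.1 t.2.2} :=
        sum_natCard_mul_natCard (flip r) r
    _ = Nat.card {t : V × V × V // r t.1 t.2.1 ∧ r t.2.1 t.2.2} :=
      Nat.card_congr <| (Involutive.toPerm (fun t : V × V × V => (t.2.1, t.1, t.2.2))
        fun _ => rfl).subtypeEquiv fun _ => Iff.rfl
    _ = dTri r + dCom r := by
      rw [Nat.card_congr (Equiv.subtypeEquivRight hsplit), natCard_subtype_or, dTri, dCom]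
      tauto

theorem dInc_eq_sum_natCard_edgeSet : dInc r = ∑ u, Nat.card (incGraph r u).edgeSet := by
  rw [dInc, natCard_subtype_prod fun u (e : Sym2 V) => ∃ v w, e = s(v, w) ∧ v ≠ w ∧ ¬ r v w ∧
    ¬ r w v ∧ ((r u v ∧ r u w) ∨ (r v u ∧ r w u))]
  refine sum_congr rfl fun u _ => ?_
  congr 2
  ext e
  induction e using Sym2.ind with
  | _ v w =>
    simp only [SimpleGraph.mem_edgeSet, incGraph, NonadjOutPair, flip, Sym2.eq_iff]
    constructor
    · rintro ⟨a, b, ⟨rfl, rfl⟩ | ⟨rfl, rfl⟩, h⟩ <;> tauto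
    · exact fun h => ⟨v, w, Or.inl ⟨rfl, rfl⟩, by tauto⟩

theorem two_mul_dInc (hasymm : ∀ u v, r u v → ¬ r v u) :
    2 * dInc r = Nat.card {t : V × V × V // NonadjOutPair r t.1 t.2.1 t.2.2} +
      Nat.card {t : V × V × V // NonadjOutPair (flip r) t.1 t.2.1 t.2.2} := by
  rw [← natCard_subtype_or, dInc_eq_sum_natCard_edgeSet, mul_sum]
  · simp only [SimpleGraph.two_mul_natCard_edgeSet]
    exact (natCard_subtype_prod fun u (x : V × V) => (incGraph r u).Adj x.1 x.2).symm
  · rintro ⟨u, v, w⟩ h h'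
    exact hasymm u v h.1 h'.1

end Digraph

theorem stmt_18 {V : Type*} [Fintype V] (r : V → V → Prop)
    (hasymm : ∀ u v, r u v → ¬ r v u)
    (hacyclic : ∀ v, ¬ Relation.TransGen r v v) :
    (1 / 2 : ℚ) * ∑ v : V, ((dIndeg r v : ℚ) - (dOutdeg r v : ℚ)) ^ 2 =
      (dEdges r : ℚ) + (dTri r : ℚ) + (dInc r : ℚ) - (dCom r : ℚ) := by
  have hcycle : ∀ u v w, r u v → r v w → ¬ r w u := fun u v w huv hvw hwu =>
    hacyclic u (.head huv (.head hvw (.single hwu)))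
  have hin : ((∑ v, dIndeg r v ^ 2 : ℕ) : ℚ) = _ := congrArg Nat.cast (sum_dIndeg_sq r hasymm)
  have hout : ((∑ v, dOutdeg r v ^ 2 : ℕ) : ℚ) = _ := congrArg Nat.cast (sum_dOutdeg_sq r hasymm)
  have hmix : ((∑ v, dIndeg r v * dOutdeg r v : ℕ) : ℚ) = _ :=
    congrArg Nat.cast (sum_dIndeg_mul_dOutdeg r hcycle)
  have hinc : ((2 * dInc r : ℕ) : ℚ) = _ := congrArg Nat.cast (two_mul_dInc r hasymm)
  have hsq : ∑ v : V, ((dIndeg r v : ℚ) - (dOutdeg r v : ℚ)) ^ 2 =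
      ∑ v, (dIndeg r v : ℚ) ^ 2 + ∑ v, (dOutdeg r v : ℚ) ^ 2 -
        2 * ∑ v, (dIndeg r v : ℚ) * dOutdeg r v := by
    simp only [sub_sq, sum_add_distrib, sum_sub_distrib, mul_sum, mul_assoc]
    ring
  push_cast at hin hout hmix hinc
  rw [hsq]
  linear_combination (1 / 2 : ℚ) * (hin + hout - 2 * hmix - hinc)
end
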